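/- Every minimal prime graph has diameter exactly 2. -/

import Mathlib

/-!
If distinct nonadjacent `u`, `v` of a minimal prime graph `Γ` had no common neighbour, every
other vertex would be a `Γᶜ`-neighbour of `u` or of `v`, and triangle-freeness of `Γᶜ` would
make the `Γᶜ`-neighbourhood of `u` and its complement a bipartition of `Γᶜ`. By connectivity
some edge of `Γ` crosses this bipartition; deleting it keeps `Γᶜ` bipartite, hence
triangle-free and 3-colourable, against minimality. The bipartition `{x}, {x}ᶜ` of the empty
graph shows in the same way that `Γ` is not complete, so its diameter is exactly 2.
-/

open SimpleGraph

def bridgeAdj (m n : ℕ) : (Fin m ⊕ Fin n) → (Fin m ⊕ Fin n) → Prop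
  | Sum.inl i, Sum.inl j => i ≠ j
  | Sum.inr i, Sum.inr j => i ≠ j
  | Sum.inl i, Sum.inr j => i.val = 0 ∧ j.val = 0
  | Sum.inr i, Sum.inl j => i.val = 0 ∧ j.val = 0

/-- The complete bridge graph `B_{m,n}`: two disjoint complete graphs on `m` and `n`
vertices respectively, joined by exactly one edge (the bridge). -/
def completeBridgeGraph (m n : ℕ) : SimpleGraph (Fin m ⊕ Fin n) where
  Adj := bridgeAdj m n
  symm := by
    constructor <;> rintro (a | a) (b | b) h <;> simp_all [bridgeAdj] <;> tauto
  loopless := by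
    constructor <;> rintro (a | a) h <;> simp_all [bridgeAdj]

/-- A minimally connected prime graph (MCPG). -/
def IsMCPG {V : Type} [Fintype V] (Γ : SimpleGraph V) : Prop :=
  2 ≤ Fintype.card V ∧ Γ.Connected ∧ Γᶜ.CliqueFree 3 ∧ Γᶜ.Colorable 3 ∧
    ∀ e ∈ Γ.edgeSet,
      ¬((Γ.deleteEdges {e}).Connected ∧ (Γ.deleteEdges {e})ᶜ.CliqueFree 3 ∧
        (Γ.deleteEdges {e})ᶜ.Colorable 3)

/-- A minimal prime graph (MPG). -/
def IsMPG {V : Type} [Fintype V] (Γ : SimpleGraph V) : Prop :=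
  2 ≤ Fintype.card V ∧ Γ.Connected ∧ Γᶜ.CliqueFree 3 ∧ Γᶜ.Colorable 3 ∧
    ∀ e ∈ Γ.edgeSet,
      ¬((Γ.deleteEdges {e})ᶜ.CliqueFree 3 ∧ (Γ.deleteEdges {e})ᶜ.Colorable 3)

/-- A possibly disconnected minimal prime graph (PDMPG). -/
def IsPDMPG {V : Type} [Fintype V] (Γ : SimpleGraph V) : Prop :=
  Γᶜ.CliqueFree 3 ∧ Γᶜ.Colorable 3 ∧
    ∀ e ∈ Γ.edgeSet,
      ¬((Γ.deleteEdges {e})ᶜ.CliqueFree 3 ∧ (Γ.deleteEdges {e})ᶜ.Colorable 3)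

namespace SimpleGraph

variable {V : Type} {G H : SimpleGraph V} {a b u v : V}

lemma compl_deleteEdges_singleton : (G.deleteEdges {s(a, b)})ᶜ = Gᶜ ⊔ edge a b := by
  rw [deleteEdges, compl_sdiff, himp_eq, sup_comm]
  rfl

lemma IsBipartiteWith.sup_edge {s t : Set V} (hG : G.IsBipartiteWith s t) (ha : a ∈ s)
    (hb : b ∈ t) : (G ⊔ edge a b).IsBipartiteWith s t where
  disjoint := hG.disjoint
  mem_of_adj x y hxy := by
    rcases hxy with hxy | hxy
    · exact hG.mem_of_adj hxy
    · obtain ⟨⟨rfl, rfl⟩ | ⟨rfl, rfl⟩, -⟩ := (edge_adj _ _ _ _).mp hxy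
      · exact .inl ⟨ha, hb⟩
      · exact .inr ⟨hb, ha⟩

lemma CliqueFree.isBipartiteWith_neighborSet (hH : H.CliqueFree 3) (huv : H.Adj u v)
    (hcover : ∀ x, x ≠ u → H.Adj u x ∨ H.Adj v x) :
    H.IsBipartiteWith (H.neighborSet u) (H.neighborSet u)ᶜ where
  disjoint := disjoint_compl_right
  mem_of_adj x y hxy := by
    classical
    by_cases hx : H.Adj u x <;> by_cases hy : H.Adj u y
    · exact (hH {u, x, y} (is3Clique_triple_iff.mpr ⟨hx, hy, hxy⟩)).elim
    · exact .inl ⟨hx, hy⟩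
    · exact .inr ⟨hx, hy⟩
    · have hxu : x ≠ u := by rintro rfl; exact hy hxy
      have hyu : y ≠ u := by rintro rfl; exact hx hxy.symm
      exact (hH {v, x, y} (is3Clique_triple_iff.mpr
        ⟨(hcover x hxu).resolve_left hx, (hcover y hyu).resolve_left hy, hxy⟩)).elim

lemma ediam_eq_two_of_commonNeighbors_nonempty [Nontrivial V] (hG : G ≠ ⊤)
    (h : ∀ u v, u ≠ v → ¬G.Adj u v → (G.commonNeighbors u v).Nonempty) : G.ediam = 2 := by
  refine le_antisymm (ediam_le_iff.mpr fun u v => ?_) ?_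
  · by_contra! huv
    obtain ⟨hne, hnadj, hempty⟩ := two_lt_edist_iff.mp huv
    exact (h u v hne hnadj).ne_empty hempty
  · have h0 : G.ediam ≠ 0 := ediam_ne_zero
    have h1 : G.ediam ≠ 1 := mt ediam_eq_one.mp hG
    generalize G.ediam = d at h0 h1
    induction d using ENat.recTopCoe <;> simp_all
    omega

end SimpleGraph

section IsMPG

variable {V : Type} [Fintype V] {Γ : SimpleGraph V} {S : Set V}

lemma IsMPG.mem_iff_mem_of_adj (h : IsMPG Γ) (hS : Γᶜ.IsBipartiteWith S Sᶜ) {a b : V}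
    (hab : Γ.Adj a b) : a ∈ S ↔ b ∈ S := by
  obtain ⟨-, -, -, -, hmin⟩ := h
  by_contra hcross
  have hbip : (Γ.deleteEdges {s(a, b)})ᶜ.IsBipartiteWith S Sᶜ := by
    rw [compl_deleteEdges_singleton]
    by_cases ha : a ∈ S
    · exact hS.sup_edge ha (fun hb => hcross (iff_of_true ha hb))
    · rw [edge_comm]
      exact hS.sup_edge (by tauto) ha
  exact hmin s(a, b) hab
    ⟨hbip.isBipartite.cliqueFree (by norm_num), hbip.isBipartite.mono (by norm_num)⟩

lemma IsMPG.mem_iff_mem (h : IsMPG Γ) (hS : Γᶜ.IsBipartiteWith S Sᶜ) (a b : V) :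
    a ∈ S ↔ b ∈ S := by
  suffices ∀ a b, a ∈ S → b ∈ S by exact ⟨this a b, this b a⟩
  intro a b ha
  by_contra hb
  obtain ⟨d, -, hd₁, hd₂⟩ := (h.2.1.preconnected a b).some.exists_boundary_dart S ha hb
  exact hd₂ ((h.mem_iff_mem_of_adj hS d.adj).mp hd₁)

lemma IsMPG.ne_top (h : IsMPG Γ) : Γ ≠ ⊤ := by
  rintro rfl
  have : Nontrivial V := Fintype.one_lt_card_iff_nontrivial.mp h.1
  obtain ⟨x, y, hxy⟩ := exists_pair_ne V
  have hS : (⊤ : SimpleGraph V)ᶜ.IsBipartiteWith {x} {x}ᶜ :=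
    ⟨disjoint_compl_right, fun _ _ hadj => by simp at hadj⟩
  exact hxy.symm ((h.mem_iff_mem hS x y).mp rfl)

lemma IsMPG.commonNeighbors_nonempty (h : IsMPG Γ) {u v : V} (hne : u ≠ v)
    (hnadj : ¬Γ.Adj u v) : (Γ.commonNeighbors u v).Nonempty := by
  by_contra hempty
  have hcover : ∀ x, x ≠ u → Γᶜ.Adj u x ∨ Γᶜ.Adj v x := by
    intro x hxu
    by_contra! hx
    have hux : Γ.Adj u x := by simpa [compl_adj, hxu.symm] using hx.1
    have hvx : Γ.Adj v x := by
      have hvx : v ≠ x := by rintro rfl; exact hnadj hux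
      simpa [compl_adj, hvx] using hx.2
    exact hempty ⟨x, (Γ.mem_commonNeighbors).mpr ⟨hux, hvx⟩⟩
  have huv : Γᶜ.Adj u v := ⟨hne, hnadj⟩
  have hS := h.2.2.1.isBipartiteWith_neighborSet huv hcover
  exact Γᶜ.irrefl ((h.mem_iff_mem hS v u).mp huv)

end IsMPG

/-- Every minimal prime graph has diameter exactly 2. -/
theorem stmt8 {V : Type} [Fintype V] (Γ : SimpleGraph V) (h : IsMPG Γ) :
    Γ.diam = 2 := by
  have : Nontrivial V := Fintype.one_lt_card_iff_nontrivial.mp h.1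
  have hediam := ediam_eq_two_of_commonNeighbors_nonempty h.ne_top
    fun _ _ => h.commonNeighbors_nonempty
  simp [diam, hediam]
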